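/- There exists at most one prestreak morphism from a prestreak X to a streak Y; that is, any two prestreak morphisms f, g : X → Y with Y a streak are equal. -/

import Mathlib

/-- A prestreak: a strict order (asymmetric and cotransitive) together with a
commutative additive monoid structure and a commutative multiplicative monoid
structure on the positive part, compatible with the order.  (The intrinsic
topology conditions of the paper are omitted, being vacuous in the classical
set-theoretic setting.) -/
structure Prestreak (X : Type*) where
  lt : X → X → Prop
  add : X → X → X
  zero : X
  mul : X → X → X
  one : X
  lt_asymm : ∀ a b, ¬ (lt a b ∧ lt b a)
  lt_cotrans : ∀ a b x, lt a b → lt a x ∨ lt x b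
  add_comm : ∀ a b, add a b = add b a
  add_assoc : ∀ a b c, add (add a b) c = add a (add b c)
  add_zero : ∀ a, add a zero = a
  zero_lt_one : lt zero one
  mul_pos : ∀ a b, lt zero a → lt zero b → lt zero (mul a b)
  mul_comm : ∀ a b, lt zero a → lt zero b → mul a b = mul b a
  mul_assoc : ∀ a b c, lt zero a → lt zero b → lt zero c →
    mul (mul a b) c = mul a (mul b c)
  mul_one : ∀ a, lt zero a → mul a one = a
  mul_add : ∀ a b c, lt zero a → lt zero b → lt zero c →
    mul (add a b) c = add (mul a c) (mul b c)
  add_lt_add_iff : ∀ a b x, (lt (add a x) (add b x) ↔ lt a b)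
  mul_lt_mul_iff : ∀ a b x, lt zero a → lt zero b → lt zero x →
    (lt (mul a x) (mul b x) ↔ lt a b)

namespace Prestreak

variable {X : Type*}

/-- Multiplication by a natural number: `0·a = 0`, `(n+1)·a = n·a + a`. -/
def nsmul (P : Prestreak X) : ℕ → X → X
  | 0, _ => P.zero
  | n + 1, a => P.add (nsmul P n a) a

/-- The canonical image of a natural number, `n ↦ n·1`. -/
def ofNat (P : Prestreak X) (n : ℕ) : X := P.nsmul n P.one

/-- Comparison `x < q` of an element of a prestreak with a rational number,
using the canonical representation `q = (q.num⁺ − q.num⁻)/q.den`: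
`x < (a−b)/c  :=  c·x + b < a`. -/
def ltQ (P : Prestreak X) (x : X) (q : ℚ) : Prop :=
  P.lt (P.add (P.nsmul q.den x) (P.ofNat ((-q.num).toNat))) (P.ofNat q.num.toNat)

/-- Comparison `q < x` of a rational with an element of a prestreak:
`(a−b)/c < x  :=  a < c·x + b`. -/
def qLt (P : Prestreak X) (q : ℚ) (x : X) : Prop :=
  P.lt (P.ofNat q.num.toNat) (P.add (P.nsmul q.den x) (P.ofNat ((-q.num).toNat)))

/-- The archimedean property for prestreaks. -/
def Archimedean (P : Prestreak X) : Prop :=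
  ∀ a b c d : X, P.lt b d →
    ∃ n : ℕ, P.lt (P.add a (P.nsmul n b)) (P.add c (P.nsmul n d))

/-- Tightness: antisymmetry of `≤` (where `a ≤ b := ¬ b < a`).
A streak is a tight archimedean prestreak. -/
def Tight (P : Prestreak X) : Prop :=
  ∀ a b : X, ¬ P.lt a b → ¬ P.lt b a → a = b

/-- The apartness relation `a # b := a < b ∨ b < a`. -/
def Apart (P : Prestreak X) (a b : X) : Prop := P.lt a b ∨ P.lt b a

/-- A morphism of prestreaks: preserves `<`, `+`, `0`, `1` and products of
positive elements. -/
def IsHom {Y : Type*} (P : Prestreak X) (Q : Prestreak Y) (f : X → Y) : Prop :=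
  (∀ a b, P.lt a b → Q.lt (f a) (f b)) ∧
  (∀ a b, f (P.add a b) = Q.add (f a) (f b)) ∧
  f P.zero = Q.zero ∧ f P.one = Q.one ∧
  (∀ a b, P.lt P.zero a → P.lt P.zero b → f (P.mul a b) = Q.mul (f a) (f b))

/-- A multiplicative structure on a prestreak: a total multiplication which is
commutative, associative, distributes over addition, has unit `1`, restricts to
the given multiplication on positive elements, and satisfies the multiplicity
condition. -/
def IsMultiplicative (P : Prestreak X) (tmul : X → X → X) : Prop :=
  (∀ a b, tmul a b = tmul b a) ∧
  (∀ a b c, tmul (tmul a b) c = tmul a (tmul b c)) ∧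
  (∀ a b c, tmul (P.add a b) c = P.add (tmul a c) (tmul b c)) ∧
  (∀ a, tmul a P.one = a) ∧
  (∀ a b, P.lt P.zero a → P.lt P.zero b → tmul a b = P.mul a b) ∧
  (∀ a b c d, P.lt b a → P.lt d c →
    P.lt (P.add (tmul a d) (tmul b c)) (P.add (tmul a c) (tmul b d)))

end Prestreak

/-!
If `f x < g x` in a streak, the archimedean property yields `n` and `m` such that, for
`t = n·x + m`, the values `f t` and `g t` are non-negative and at least `2` apart. Since `k < k + 1`
in the source, cotransitivity puts `t` above `k` or below `k + 1`, and the morphisms carry this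
over; so `k + 2 < g t` forces `k + 1 ≤ f t`. By induction every natural number lies below `f t`,
contradicting the archimedean property. Tightness then turns `f x ≤ g x ≤ f x` into equality.
-/

namespace Prestreak

variable {X Y : Type*}

section Order

variable (P : Prestreak X)

lemma not_lt_of_lt {a b : X} (h : P.lt a b) : ¬ P.lt b a :=
  fun h' => P.lt_asymm a b ⟨h, h'⟩

lemma lt_of_not_lt_of_lt {a b c : X} (hab : ¬ P.lt b a) (hbc : P.lt b c) : P.lt a c :=
  (P.lt_cotrans b c a hbc).resolve_left hab

lemma zero_add (a : X) : P.add P.zero a = a := by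
  rw [P.add_comm, P.add_zero]

lemma add_right_comm (a b c : X) : P.add (P.add a b) c = P.add (P.add a c) b := by
  rw [P.add_assoc, P.add_comm b, ← P.add_assoc]

lemma lt_add_of_pos_right (a : X) {b : X} (hb : P.lt P.zero b) : P.lt a (P.add a b) := by
  have h := (P.add_lt_add_iff P.zero b a).2 hb
  rwa [P.zero_add, P.add_comm b] at h

lemma nsmul_zero (n : ℕ) : P.nsmul n P.zero = P.zero := by
  induction n with
  | zero => rfl
  | succ n ih => rw [nsmul, ih, P.add_zero]

lemma add_nsmul (m n : ℕ) (a : X) :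
    P.nsmul (m + n) a = P.add (P.nsmul m a) (P.nsmul n a) := by
  induction n with
  | zero => exact (P.add_zero _).symm
  | succ n ih => rw [← Nat.add_assoc, nsmul, nsmul, ih, P.add_assoc]

lemma ofNat_add (m n : ℕ) : P.ofNat (m + n) = P.add (P.ofNat m) (P.ofNat n) :=
  P.add_nsmul m n P.one

lemma ofNat_lt_ofNat_succ (n : ℕ) : P.lt (P.ofNat n) (P.ofNat (n + 1)) :=
  P.lt_add_of_pos_right _ P.zero_lt_one

lemma Archimedean.exists_lt_add_ofNat {P : Prestreak X} (hP : P.Archimedean) (a c : X) :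
    ∃ n, P.lt a (P.add c (P.ofNat n)) := by
  obtain ⟨n, hn⟩ := hP a P.zero c P.one P.zero_lt_one
  rw [P.nsmul_zero, P.add_zero] at hn
  exact ⟨n, hn⟩

end Order

section Hom

variable {P : Prestreak X} {Q : Prestreak Y} {f g : X → Y}

lemma IsHom.map_add (hf : P.IsHom Q f) (a b : X) : f (P.add a b) = Q.add (f a) (f b) :=
  hf.2.1 a b

lemma IsHom.map_nsmul (hf : P.IsHom Q f) (n : ℕ) (a : X) :
    f (P.nsmul n a) = Q.nsmul n (f a) := by
  induction n with
  | zero => exact hf.2.2.1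
  | succ n ih => rw [nsmul, nsmul, hf.map_add, ih]

lemma IsHom.map_ofNat (hf : P.IsHom Q f) (n : ℕ) : f (P.ofNat n) = Q.ofNat n := by
  rw [ofNat, ofNat, hf.map_nsmul, hf.2.2.2.1]

lemma IsHom.not_lt_ofNat_of_ofNat_succ_lt (hf : P.IsHom Q f) (hg : P.IsHom Q g) {t : X} {k : ℕ}
    (hk : Q.lt (Q.ofNat (k + 1)) (g t)) : ¬ Q.lt (f t) (Q.ofNat k) := by
  rcases P.lt_cotrans _ _ t (P.ofNat_lt_ofNat_succ k) with hkt | htk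
  · simpa only [hf.map_ofNat] using Q.not_lt_of_lt (hf.1 _ _ hkt)
  · exact absurd (hg.1 _ _ htk) (by simpa only [hg.map_ofNat] using Q.not_lt_of_lt hk)

lemma IsHom.not_map_add_two_lt (hQ : Q.Archimedean) (hf : P.IsHom Q f) (hg : P.IsHom Q g)
    {t : X} (ht : ¬ Q.lt (f t) Q.zero) : ¬ Q.lt (Q.add (f t) (Q.ofNat 2)) (g t) := by
  intro hgap
  have hle : ∀ k, ¬ Q.lt (f t) (Q.ofNat k) := by
    intro k
    induction k with
    | zero => exact ht
    | succ k ih =>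
      refine hf.not_lt_ofNat_of_ofNat_succ_lt hg ?_
      rw [Q.ofNat_add k 2]
      exact Q.lt_of_not_lt_of_lt (mt (Q.add_lt_add_iff _ _ _).1 ih) hgap
  obtain ⟨k, hk⟩ := hQ.exists_lt_add_ofNat (f t) Q.zero
  exact hle k (by rwa [Q.zero_add] at hk)

lemma IsHom.not_lt_apply (hQ : Q.Archimedean) (hf : P.IsHom Q f) (hg : P.IsHom Q g) (x : X) :
    ¬ Q.lt (f x) (g x) := by
  intro hfg
  obtain ⟨n, hn⟩ := hQ (Q.ofNat 2) (f x) Q.zero (g x) hfg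
  obtain ⟨m, hm⟩ := hQ.exists_lt_add_ofNat Q.zero (Q.nsmul n (f x))
  have hmap : ∀ {h : X → Y}, P.IsHom Q h →
      h (P.add (P.nsmul n x) (P.ofNat m)) = Q.add (Q.nsmul n (h x)) (Q.ofNat m) := fun hh => by
    rw [hh.map_add, hh.map_nsmul, hh.map_ofNat]
  rw [Q.zero_add] at hn
  refine hf.not_map_add_two_lt hQ hg (t := P.add (P.nsmul n x) (P.ofNat m)) ?_ ?_
  · rw [hmap hf]
    exact Q.not_lt_of_lt hm
  · rw [hmap hf, hmap hg, Q.add_right_comm, Q.add_comm _ (Q.ofNat 2)]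
    exact (Q.add_lt_add_iff _ _ _).2 hn

end Hom

end Prestreak

/-- There is at most one prestreak morphism from a prestreak to a streak. -/
theorem hom_to_streak_unique {X Y : Type*}
    (P : Prestreak X) (Q : Prestreak Y) (hQA : Q.Archimedean) (hQT : Q.Tight)
    (f g : X → Y) (hf : P.IsHom Q f) (hg : P.IsHom Q g) :
    f = g :=
  funext fun x => hQT _ _ (hf.not_lt_apply hQA hg x) (hg.not_lt_apply hQA hf x)
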